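/- Let j' be a positive real with n = 2j' an integer, n ≥ 2, and let j ≥ 0 be real. Let v be a vector in the n-qubit space (complex functions on Fin n → Fin 2) satisfying J² v = j(j+1)·v, where J² = J_x² + J_y² + J_z² and J_w = (1/2)·Σ_{i=1}^n σ_w^{(i)}. Then the averaged singlet projector E = (1/C(n,2))·Σ_{1≤r<s≤n} Ξ_{r,s}, where Ξ_{r,s} = (1 − SWAP_{r,s})/2, satisfies E v = e_{j'}(j)·v with e_{j'}(j) = (j'(j'+1) − j(j+1)) / (2j'(2j'−1)). -/
import Mathlib


/-- The probability `e_{j'}(j)` that a random SWAP test on `2j'` qubits in the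
angular-momentum-`j` sector detects a singlet. -/
noncomputable def eprob (j' j : ℝ) : ℝ :=
  (j' * (j' + 1) - j * (j + 1)) / (2 * j' * (2 * j' - 1))

/-- The permutation operator `P(π)` on `n` qubits: `(P(π))_{x,y} = 1` if `x ∘ π = y`,
and `0` otherwise. In particular `permOp n (Equiv.swap r s)` is the SWAP operator on
qubits `r` and `s`. -/
def permOp (n : ℕ) (π : Equiv.Perm (Fin n)) :
    Matrix (Fin n → Fin 2) (Fin n → Fin 2) ℂ :=
  fun x y => if x ∘ π = y then 1 else 0

/-- The single-site operator `B^{(i)}` acting as the `2 × 2` matrix `B` on qubit `i` and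
as the identity elsewhere. -/
def siteOp (n : ℕ) (B : Matrix (Fin 2) (Fin 2) ℂ) (i : Fin n) :
    Matrix (Fin n → Fin 2) (Fin n → Fin 2) ℂ :=
  fun x y => B (x i) (y i) * ∏ l ∈ Finset.univ.erase i, (if x l = y l then 1 else 0)

/-- The Pauli matrix `σ_x`. -/
def pauliX : Matrix (Fin 2) (Fin 2) ℂ := !![0, 1; 1, 0]

/-- The Pauli matrix `σ_y`. -/
noncomputable def pauliY : Matrix (Fin 2) (Fin 2) ℂ := !![0, -Complex.I; Complex.I, 0]

/-- The Pauli matrix `σ_z`. -/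
def pauliZ : Matrix (Fin 2) (Fin 2) ℂ := !![1, 0; 0, -1]

/-- The total angular momentum component `J_w = (1/2) ∑ i, σ_w^{(i)}` on `n` qubits. -/
noncomputable def Jop (n : ℕ) (B : Matrix (Fin 2) (Fin 2) ℂ) :
    Matrix (Fin n → Fin 2) (Fin n → Fin 2) ℂ :=
  (1 / 2 : ℂ) • ∑ i, siteOp n B i

/-- The squared total angular momentum `J² = J_x² + J_y² + J_z²` on `n` qubits. -/
noncomputable def Jsq (n : ℕ) : Matrix (Fin n → Fin 2) (Fin n → Fin 2) ℂ :=
  Jop n pauliX * Jop n pauliX + Jop n pauliY * Jop n pauliY + Jop n pauliZ * Jop n pauliZ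

open Finset

variable {n : ℕ}

lemma prod_delta (x y : Fin n → Fin 2) :
    ∏ l, (if x l = y l then (1:ℂ) else 0) = if x = y then 1 else 0 := by
  by_cases h : x = y
  · simp [h]
  · obtain ⟨l, hl⟩ := Function.ne_iff.mp h
    rw [if_neg h]
    exact Finset.prod_eq_zero (mem_univ l) (if_neg hl)

lemma sum_collapse' (i : Fin n) (x : Fin n → Fin 2) (g : (Fin n → Fin 2) → ℂ) :
    ∑ z, (∏ l ∈ univ.erase i, (if x l = z l then (1:ℂ) else 0)) * g z
      = ∑ a, g (Function.update x i a) := by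
  classical
  rw [← Finset.sum_filter_add_sum_filter_not univ (fun z => ∀ l ≠ i, z l = x l)]
  have h2 : ∑ z ∈ univ.filter (fun z => ¬ ∀ l ≠ i, z l = x l),
      (∏ l ∈ univ.erase i, (if x l = z l then (1:ℂ) else 0)) * g z = 0 := by
    apply Finset.sum_eq_zero
    intro z hz
    simp only [mem_filter, not_forall] at hz
    obtain ⟨l, hl, hzl⟩ := hz.2
    refine mul_eq_zero_of_left ?_ (g z)
    exact Finset.prod_eq_zero (i := l) (Finset.mem_erase.mpr ⟨hl, mem_univ l⟩)
      (if_neg (fun h => hzl h.symm))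
  rw [h2, add_zero]
  refine Finset.sum_nbij' (fun z => z i) (fun a => Function.update x i a) ?_ ?_ ?_ ?_ ?_
  · intro a _; exact mem_univ _
  · intro a _
    simp only [mem_filter, mem_univ, true_and]
    intro l hl; exact Function.update_of_ne hl a x
  · intro z hz
    simp only [mem_filter, mem_univ, true_and] at hz
    funext l
    by_cases hl : l = i
    · subst hl; simp
    · show Function.update x i (z i) l = z l
      rw [Function.update_of_ne hl]; exact (hz l hl).symm
  · intro a _; simp
  · intro z hz
    simp only [mem_filter, mem_univ, true_and] at hz
    have : ∏ l ∈ univ.erase i, (if x l = z l then (1:ℂ) else 0) = 1 := by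
      apply Finset.prod_eq_one
      intro l hl
      rw [if_pos ((hz l (Finset.mem_erase.mp hl).1).symm)]
    rw [this, one_mul]
    congr 1
    funext l
    by_cases hl : l = i
    · subst hl; simp
    · rw [Function.update_of_ne hl]; exact hz l hl


lemma siteOp_mul_apply (B : Matrix (Fin 2) (Fin 2) ℂ) (i : Fin n)
    (M : Matrix (Fin n → Fin 2) (Fin n → Fin 2) ℂ) (x y : Fin n → Fin 2) :
    (siteOp n B i * M) x y = ∑ a, B (x i) a * M (Function.update x i a) y := by
  rw [Matrix.mul_apply]
  have : ∀ z, siteOp n B i x z * M z y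
      = (∏ l ∈ univ.erase i, (if x l = z l then (1:ℂ) else 0))
        * (B (x i) (z i) * M z y) := by
    intro z; simp [siteOp]; ring
  simp only [this]
  rw [sum_collapse' i x (fun z => B (x i) (z i) * M z y)]
  simp

lemma siteOp_mul_siteOp_same (B C : Matrix (Fin 2) (Fin 2) ℂ) (i : Fin n) :
    siteOp n B i * siteOp n C i = siteOp n (B * C) i := by
  ext x y
  rw [siteOp_mul_apply]
  simp only [siteOp, Function.update_self]
  rw [Matrix.mul_apply, Finset.sum_mul]
  refine Finset.sum_congr rfl fun a _ => ?_
  have : ∀ l ∈ univ.erase i, (if Function.update x i a l = y l then (1:ℂ) else 0)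
      = (if x l = y l then (1:ℂ) else 0) := by
    intro l hl
    rw [Function.update_of_ne (Finset.mem_erase.mp hl).1]
  rw [Finset.prod_congr rfl this]
  ring

lemma siteOp_mul_siteOp_ne (B C : Matrix (Fin 2) (Fin 2) ℂ) {r s : Fin n} (hrs : r ≠ s)
    (x y : Fin n → Fin 2) :
    (siteOp n B r * siteOp n C s) x y
      = B (x r) (y r) * C (x s) (y s)
        * ∏ l ∈ (univ.erase r).erase s, (if x l = y l then (1:ℂ) else 0) := by
  rw [siteOp_mul_apply]
  have key : ∀ a, siteOp n C s (Function.update x r a) y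
      = C (x s) (y s) * ((if a = y r then (1:ℂ) else 0)
          * ∏ l ∈ (univ.erase r).erase s, (if x l = y l then (1:ℂ) else 0)) := by
    intro a
    simp only [siteOp, Function.update_of_ne (Ne.symm hrs)]
    congr 1
    have hr : r ∈ univ.erase s := Finset.mem_erase.mpr ⟨hrs, mem_univ r⟩
    rw [← Finset.mul_prod_erase _ _ hr, Function.update_self]
    congr 1
    rw [Finset.erase_right_comm]
    refine Finset.prod_congr rfl fun l hl => ?_
    rw [Function.update_of_ne (Finset.mem_erase.mp (Finset.mem_erase.mp hl).2).1]
  simp only [key]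
  rw [show ∀ f : Fin 2 → ℂ, (∑ a, B (x r) a * (C (x s) (y s) * ((if a = y r then (1:ℂ) else 0) * f a)))
      = ∑ a, (if a = y r then (1:ℂ) else 0) * (B (x r) a * C (x s) (y s) * f a) from
    fun f => Finset.sum_congr rfl fun a _ => by ring]
  simp only [ite_mul, one_mul, zero_mul, Finset.sum_ite_eq', mem_univ, if_true]

lemma siteOp_one (i : Fin n) : siteOp n 1 i = 1 := by
  ext x y
  simp only [siteOp, Matrix.one_apply]
  rw [Finset.mul_prod_erase _ (fun l => if x l = y l then (1:ℂ) else 0) (mem_univ i)]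
  exact prod_delta x y

lemma pauliX_sq : pauliX * pauliX = 1 := by
  ext i j; fin_cases i <;> fin_cases j <;>
    simp [pauliX, Matrix.mul_apply, Fin.sum_univ_two, Matrix.one_apply]

lemma pauliY_sq : pauliY * pauliY = 1 := by
  ext i j; fin_cases i <;> fin_cases j <;>
    simp [pauliY, Matrix.mul_apply, Fin.sum_univ_two, Matrix.one_apply, Complex.I_mul_I]

lemma pauliZ_sq : pauliZ * pauliZ = 1 := by
  ext i j; fin_cases i <;> fin_cases j <;>
    simp [pauliZ, Matrix.mul_apply, Fin.sum_univ_two, Matrix.one_apply]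

lemma pauli_sum_id (a b c d : Fin 2) :
    pauliX a b * pauliX c d + pauliY a b * pauliY c d + pauliZ a b * pauliZ c d
      = 2 * ((if a = d then (1:ℂ) else 0) * (if c = b then 1 else 0))
        - (if a = b then (1:ℂ) else 0) * (if c = d then 1 else 0) := by
  fin_cases a <;> fin_cases b <;> fin_cases c <;> fin_cases d <;>
    simp [pauliX, pauliY, pauliZ] <;> norm_num

lemma one_entry {r s : Fin n} (hrs : r ≠ s) (x y : Fin n → Fin 2) :
    (1 : Matrix (Fin n → Fin 2) (Fin n → Fin 2) ℂ) x y
      = (if x r = y r then (1:ℂ) else 0) * ((if x s = y s then 1 else 0)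
          * ∏ l ∈ (univ.erase r).erase s, (if x l = y l then (1:ℂ) else 0)) := by
  rw [Matrix.one_apply, ← prod_delta x y,
    ← Finset.mul_prod_erase _ _ (mem_univ r),
    ← Finset.mul_prod_erase _ _ (Finset.mem_erase.mpr ⟨Ne.symm hrs, mem_univ s⟩)]

lemma swap_entry {r s : Fin n} (hrs : r ≠ s) (x y : Fin n → Fin 2) :
    permOp n (Equiv.swap r s) x y
      = (if x s = y r then (1:ℂ) else 0) * ((if x r = y s then 1 else 0)
          * ∏ l ∈ (univ.erase r).erase s, (if x l = y l then (1:ℂ) else 0)) := by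
  show (if x ∘ (Equiv.swap r s) = y then (1:ℂ) else 0) = _
  rw [← prod_delta (x ∘ (Equiv.swap r s)) y,
    ← Finset.mul_prod_erase _ _ (mem_univ r),
    ← Finset.mul_prod_erase _ _ (Finset.mem_erase.mpr ⟨Ne.symm hrs, mem_univ s⟩)]
  simp only [Function.comp_apply, Equiv.swap_apply_left, Equiv.swap_apply_right]
  congr 1
  congr 1
  refine Finset.prod_congr rfl fun l hl => ?_
  have h1 := (Finset.mem_erase.mp hl).1
  have h2 := (Finset.mem_erase.mp (Finset.mem_erase.mp hl).2).1
  simp only [Equiv.swap_apply_of_ne_of_ne h2 h1]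

lemma pair_sum {r s : Fin n} (hrs : r ≠ s) :
    siteOp n pauliX r * siteOp n pauliX s + siteOp n pauliY r * siteOp n pauliY s
        + siteOp n pauliZ r * siteOp n pauliZ s
      = (2:ℂ) • permOp n (Equiv.swap r s) - 1 := by
  ext x y
  simp only [Matrix.add_apply, Matrix.sub_apply, Matrix.smul_apply, smul_eq_mul]
  rw [siteOp_mul_siteOp_ne _ _ hrs, siteOp_mul_siteOp_ne _ _ hrs,
    siteOp_mul_siteOp_ne _ _ hrs, swap_entry hrs, one_entry hrs]
  have := pauli_sum_id (x r) (y r) (x s) (y s)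
  set P := ∏ l ∈ (univ.erase r).erase s, (if x l = y l then (1:ℂ) else 0)
  calc pauliX (x r) (y r) * pauliX (x s) (y s) * P
        + pauliY (x r) (y r) * pauliY (x s) (y s) * P
        + pauliZ (x r) (y r) * pauliZ (x s) (y s) * P
      = (pauliX (x r) (y r) * pauliX (x s) (y s)
        + pauliY (x r) (y r) * pauliY (x s) (y s)
        + pauliZ (x r) (y r) * pauliZ (x s) (y s)) * P := by ring
    _ = _ := by rw [this]; ring

lemma sum_pairs_split {M : Type*} [AddCommMonoid M] (f : Fin n × Fin n → M)
    (hf : ∀ a b : Fin n, f (b, a) = f (a, b)) :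
    ∑ p ∈ univ.filter (fun p : Fin n × Fin n => p.1 ≠ p.2), f p
      = ∑ p ∈ univ.filter (fun p : Fin n × Fin n => p.1 < p.2), f p
        + ∑ p ∈ univ.filter (fun p : Fin n × Fin n => p.1 < p.2), f p := by
  have hsplit : univ.filter (fun p : Fin n × Fin n => p.1 ≠ p.2)
      = univ.filter (fun p : Fin n × Fin n => p.1 < p.2)
        ∪ univ.filter (fun p : Fin n × Fin n => p.2 < p.1) := by
    rw [← Finset.filter_or]
    apply Finset.filter_congr
    intro p _
    exact ne_iff_lt_or_gt
  have hdisj : Disjoint (univ.filter (fun p : Fin n × Fin n => p.1 < p.2))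
      (univ.filter (fun p : Fin n × Fin n => p.2 < p.1)) := by
    rw [Finset.disjoint_left]
    intro p hp hp'
    simp only [mem_filter] at hp hp'
    exact absurd hp'.2 (not_lt_of_gt hp.2)
  rw [hsplit, Finset.sum_union hdisj]
  congr 1
  refine Finset.sum_nbij' (fun p => (p.2, p.1)) (fun p => (p.2, p.1)) ?_ ?_ ?_ ?_ ?_
  · intro p hp; simp only [mem_filter] at hp ⊢; exact ⟨mem_univ _, hp.2⟩
  · intro p hp; simp only [mem_filter] at hp ⊢; exact ⟨mem_univ _, hp.2⟩
  · intro p _; rfl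
  · intro p _; rfl
  · intro p _
    show f p = f (p.2, p.1)
    rw [hf p.2 p.1]

lemma card_lt_pairs : (univ.filter (fun p : Fin n × Fin n => p.1 < p.2)).card = n.choose 2 := by
  have h := sum_pairs_split (n := n) (fun _ => (1 : ℕ)) (fun _ _ => rfl)
  simp only [Finset.sum_const, smul_eq_mul, mul_one] at h
  have hne : (univ.filter (fun p : Fin n × Fin n => p.1 ≠ p.2)) = (univ : Finset (Fin n)).offDiag := by
    ext p; simp [Finset.mem_offDiag]
  rw [hne, Finset.offDiag_card, Finset.card_univ, Fintype.card_fin] at h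
  have h1 : n.choose 2 * 2 = n * (n - 1) := by
    rw [Nat.choose_two_right, Nat.div_mul_cancel (Nat.even_mul_pred_self n).two_dvd]
  have h3 : n * (n - 1) = n * n - n := by
    cases n with
    | zero => simp
    | succ m => simp [Nat.succ_sub_one, Nat.mul_succ, Nat.mul_sub]
  omega

lemma sum_mul_sum_split (B : Matrix (Fin 2) (Fin 2) ℂ) (hB : B * B = 1)
    (hone : siteOp n 1 = fun _ => 1)
    (hsame : ∀ i : Fin n, siteOp n B i * siteOp n B i = siteOp n (B * B) i) :
    (∑ i, siteOp n B i) * (∑ k, siteOp n B k)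
      = (n : ℂ) • 1 + ∑ p ∈ univ.filter (fun p : Fin n × Fin n => p.1 ≠ p.2),
          (siteOp n B p.1 * siteOp n B p.2) := by
  rw [Finset.sum_mul_sum]
  have : ∑ i : Fin n, ∑ k : Fin n, siteOp n B i * siteOp n B k
      = ∑ p : Fin n × Fin n, siteOp n B p.1 * siteOp n B p.2 := by
    rw [← Finset.univ_product_univ, Finset.sum_product]
  rw [this, ← Finset.sum_filter_add_sum_filter_not univ (fun p : Fin n × Fin n => p.1 = p.2)]
  congr 1
  have hdiag : ∑ p ∈ univ.filter (fun p : Fin n × Fin n => p.1 = p.2),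
      siteOp n B p.1 * siteOp n B p.2 = ∑ i : Fin n, (1 : Matrix (Fin n → Fin 2) (Fin n → Fin 2) ℂ) := by
    refine Finset.sum_nbij' (fun p => p.1) (fun i => (i, i)) ?_ ?_ ?_ ?_ ?_
    · intro p _; exact mem_univ _
    · intro i _; simp
    · intro p hp
      simp only [mem_filter] at hp
      exact Prod.ext rfl hp.2
    · intro i _; rfl
    · intro p hp
      simp only [mem_filter] at hp
      rw [← hp.2, hsame p.1, hB, hone]
  rw [hdiag, Finset.sum_const, Finset.card_univ, Fintype.card_fin, Nat.cast_smul_eq_nsmul ℂ]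

lemma Jsq_eq (n : ℕ) :
    Jsq n = ((3 * (n:ℂ) - ((n:ℂ) * n - n)) / 4) • 1
      + ∑ p ∈ univ.filter (fun p : Fin n × Fin n => p.1 < p.2),
          permOp n (Equiv.swap p.1 p.2) := by
  have hquarter : ∀ B : Matrix (Fin 2) (Fin 2) ℂ,
      Jop n B * Jop n B = (1/4 : ℂ) • ((∑ i, siteOp n B i) * (∑ k, siteOp n B k)) := by
    intro B
    rw [Jop, smul_mul_assoc, mul_smul_comm, smul_smul]
    norm_num
  have hone : siteOp n (1 : Matrix (Fin 2) (Fin 2) ℂ) = fun _ => 1 := funext fun i => siteOp_one i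
  have hsplit : ∀ B : Matrix (Fin 2) (Fin 2) ℂ, B * B = 1 →
      (∑ i, siteOp n B i) * (∑ k, siteOp n B k)
        = (n : ℂ) • 1 + ∑ p ∈ univ.filter (fun p : Fin n × Fin n => p.1 ≠ p.2),
            (siteOp n B p.1 * siteOp n B p.2) :=
    fun B hB => sum_mul_sum_split B hB hone (fun i => siteOp_mul_siteOp_same B B i)
  rw [Jsq, hquarter pauliX, hquarter pauliY, hquarter pauliZ,
    hsplit pauliX pauliX_sq, hsplit pauliY pauliY_sq, hsplit pauliZ pauliZ_sq]
  have hcomb :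
      (∑ p ∈ univ.filter (fun p : Fin n × Fin n => p.1 ≠ p.2),
          (siteOp n pauliX p.1 * siteOp n pauliX p.2))
      + ((∑ p ∈ univ.filter (fun p : Fin n × Fin n => p.1 ≠ p.2),
          (siteOp n pauliY p.1 * siteOp n pauliY p.2))
      + (∑ p ∈ univ.filter (fun p : Fin n × Fin n => p.1 ≠ p.2),
          (siteOp n pauliZ p.1 * siteOp n pauliZ p.2)))
      = (2:ℂ) • ((∑ p ∈ univ.filter (fun p : Fin n × Fin n => p.1 < p.2),
            permOp n (Equiv.swap p.1 p.2))
          + ∑ p ∈ univ.filter (fun p : Fin n × Fin n => p.1 < p.2),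
            permOp n (Equiv.swap p.1 p.2))
        - ((n:ℂ) * n - n) • 1 := by
    rw [← Finset.sum_add_distrib, ← Finset.sum_add_distrib]
    have h1 : ∀ p ∈ univ.filter (fun p : Fin n × Fin n => p.1 ≠ p.2),
        (siteOp n pauliX p.1 * siteOp n pauliX p.2)
          + ((siteOp n pauliY p.1 * siteOp n pauliY p.2)
          + (siteOp n pauliZ p.1 * siteOp n pauliZ p.2))
        = (2:ℂ) • permOp n (Equiv.swap p.1 p.2) - 1 := by
      intro p hp
      rw [← add_assoc]
      exact pair_sum (Finset.mem_filter.mp hp).2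
    rw [Finset.sum_congr rfl h1, Finset.sum_sub_distrib, Finset.sum_const, ← Finset.smul_sum]
    have h2 : ∑ p ∈ univ.filter (fun p : Fin n × Fin n => p.1 ≠ p.2),
          permOp n (Equiv.swap p.1 p.2)
        = (∑ p ∈ univ.filter (fun p : Fin n × Fin n => p.1 < p.2),
            permOp n (Equiv.swap p.1 p.2))
          + ∑ p ∈ univ.filter (fun p : Fin n × Fin n => p.1 < p.2),
            permOp n (Equiv.swap p.1 p.2) :=
      sum_pairs_split (fun p => permOp n (Equiv.swap p.1 p.2))
        (fun a b => show permOp n (Equiv.swap b a) = permOp n (Equiv.swap a b) by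
          rw [Equiv.swap_comm])
    rw [h2]
    have hcard := sum_pairs_split (n := n) (fun _ => (1 : ℕ)) (fun _ _ => rfl)
    simp only [Finset.sum_const, smul_eq_mul, mul_one] at hcard
    have hne : (univ.filter (fun p : Fin n × Fin n => p.1 ≠ p.2))
        = (univ : Finset (Fin n)).offDiag := by
      ext p; simp [Finset.mem_offDiag]
    rw [hne, Finset.offDiag_card, Finset.card_univ, Fintype.card_fin]
    congr 1
    have hle : n ≤ n * n := by nlinarith
    rw [← Nat.cast_smul_eq_nsmul ℂ]
    push_cast [Nat.cast_sub hle]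
    ring_nf
  rw [← smul_add, ← smul_add]
  set SX := ∑ p ∈ univ.filter (fun p : Fin n × Fin n => p.1 ≠ p.2),
      (siteOp n pauliX p.1 * siteOp n pauliX p.2) with hSX
  set SY := ∑ p ∈ univ.filter (fun p : Fin n × Fin n => p.1 ≠ p.2),
      (siteOp n pauliY p.1 * siteOp n pauliY p.2) with hSY
  set SZ := ∑ p ∈ univ.filter (fun p : Fin n × Fin n => p.1 ≠ p.2),
      (siteOp n pauliZ p.1 * siteOp n pauliZ p.2) with hSZ
  set S := ∑ p ∈ univ.filter (fun p : Fin n × Fin n => p.1 < p.2),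
      permOp n (Equiv.swap p.1 p.2) with hS
  set o := (1 : Matrix (Fin n → Fin 2) (Fin n → Fin 2) ℂ) with ho
  rw [show (n:ℂ) • o + SX + ((n:ℂ) • o + SY) + ((n:ℂ) • o + SZ)
      = ((n:ℂ) • o + ((n:ℂ) • o + (n:ℂ) • o)) + (SX + (SY + SZ)) from by abel, hcomb]
  module

/-- **Eigenvalue of the averaged singlet projector on an angular-momentum sector.**
Let `n = 2j' ≥ 2` and let `v` be an `n`-qubit vector with `J² v = j(j+1) v`. Then the
averaged singlet projector `E = (1/C(n,2)) ∑_{r<s} Ξ_{r,s}`, with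
`Ξ_{r,s} = (1 - SWAP_{r,s})/2`, satisfies `E v = e_{j'}(j) v`, where
`e_{j'}(j) = (j'(j'+1) - j(j+1)) / (2j'(2j'-1))`. -/
theorem averaged_singlet_projector_eigenvalue
    (n : ℕ) (hn : 2 ≤ n) (j' j : ℝ) (hj' : 0 < j') (hnj' : (n : ℝ) = 2 * j') (hj : 0 ≤ j)
    (v : (Fin n → Fin 2) → ℂ)
    (hv : (Jsq n).mulVec v = ((j * (j + 1) : ℝ) : ℂ) • v) :
    ((1 / (n.choose 2 : ℂ)) •
        ∑ p ∈ Finset.univ.filter (fun p : Fin n × Fin n => p.1 < p.2),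
          (2 : ℂ)⁻¹ • ((1 : Matrix (Fin n → Fin 2) (Fin n → Fin 2) ℂ)
              - permOp n (Equiv.swap p.1 p.2))).mulVec v
      = ((eprob j' j : ℝ) : ℂ) • v := by
  set c : ℂ := (3 * (n:ℂ) - ((n:ℂ) * n - n)) / 4 with hc
  set S := ∑ p ∈ univ.filter (fun p : Fin n × Fin n => p.1 < p.2),
      permOp n (Equiv.swap p.1 p.2) with hS
  have hSeq : S = Jsq n - c • 1 := by rw [Jsq_eq n]; abel
  have hSv : S.mulVec v = ((j * (j + 1) : ℝ) : ℂ) • v - c • v := by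
    rw [hSeq, Matrix.sub_mulVec, hv, Matrix.smul_mulVec, Matrix.one_mulVec]
  have hsum : ∑ p ∈ univ.filter (fun p : Fin n × Fin n => p.1 < p.2),
        (2 : ℂ)⁻¹ • ((1 : Matrix (Fin n → Fin 2) (Fin n → Fin 2) ℂ)
            - permOp n (Equiv.swap p.1 p.2))
      = (2 : ℂ)⁻¹ • (((n.choose 2 : ℕ) : ℂ) • 1 - S) := by
    rw [← Finset.smul_sum, Finset.sum_sub_distrib, Finset.sum_const, card_lt_pairs,
      ← Nat.cast_smul_eq_nsmul ℂ]
  rw [hsum, Matrix.smul_mulVec, Matrix.smul_mulVec, Matrix.sub_mulVec,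
    Matrix.smul_mulVec, Matrix.one_mulVec, hSv]
  match_scalars
  -- scalar identity in ℂ
  have hn1 : (1:ℕ) ≤ n := le_trans (by norm_num) hn
  have hch : ((n.choose 2 : ℕ) : ℂ) * 2 = (n:ℂ) * ((n:ℂ) - 1) := by
    have h1 : n.choose 2 * 2 = n * (n - 1) := by
      rw [Nat.choose_two_right, Nat.div_mul_cancel (Nat.even_mul_pred_self n).two_dvd]
    have := congrArg (fun k : ℕ => (k : ℂ)) h1
    push_cast [Nat.cast_sub hn1] at this
    exact this
  have hN : (n:ℂ) = 2 * (j' : ℂ) := by exact_mod_cast congrArg Complex.ofReal hnj'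
  have hj'0 : (j' : ℂ) ≠ 0 := by exact_mod_cast Complex.ofReal_ne_zero.mpr (ne_of_gt hj')
  have h2j : (2 * (j' : ℂ) - 1) ≠ 0 := by
    have : (2 * j' - 1 : ℝ) ≠ 0 := by
      have : (2:ℝ) ≤ 2 * j' := by rw [← hnj']; exact_mod_cast hn
      linarith
    exact_mod_cast Complex.ofReal_ne_zero.mpr this
  have hch0 : ((n.choose 2 : ℕ) : ℂ) ≠ 0 := by
    intro h0
    rw [h0, zero_mul, hN] at hch
    have := mul_ne_zero (mul_ne_zero (two_ne_zero) hj'0) h2j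
    exact this hch.symm
  rw [hN] at hch
  have hchval : ((n.choose 2 : ℕ) : ℂ) = (j' : ℂ) * (2 * (j' : ℂ) - 1) := by
    linear_combination hch / 2
  rw [hc, eprob, hchval, hN]
  push_cast
  field_simp
  ring
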